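/- There exists a nonnegative real sequence {a_n}_{n≥1} which is a mean value bounded variation sequence (MVBVS) but is not a group bounded variation sequence in the general sense; i.e., for every integer N_0 ≥ 1 and every constant C > 0 there is some n ≥ 1 with ∑_{k=n}^{2n} |a_k − a_{k+1}| > C · max_{n ≤ k < n+N_0} a_k. -/

import Mathlib

/-!
Take for `a` the indicator of the dyadic blocks `[2^b, 2^(b+1))` with `b` even. On `[n, 2n + 1]`
the function `Nat.log 2` jumps exactly once, so the variation over `[n, 2n]` is exactly `1` for
every `n ≥ 1`. Since `a k + a (2k) = 1`, the sum of `a` over `[n, 4n)` is at least `n`, which is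
the MVBV inequality with `λ = 4`, `C = 1`. But a window of fixed length `N₀` at the start of a
long block with `b` odd sees only zeros, so no GBV bound can hold.
-/

/-- A nonnegative sequence (indexed from 1) is a mean value bounded variation sequence. -/
def IsMVBVS (a : ℕ → ℝ) : Prop :=
  ∃ lam : ℝ, 2 ≤ lam ∧ ∃ C : ℝ, 0 < C ∧ ∀ n : ℕ, 1 ≤ n →
    ∑ k ∈ Finset.Icc n (2 * n), |a k - a (k + 1)| ≤
      (C / n) * ∑ k ∈ Finset.Icc ⌊(n : ℝ) / lam⌋₊ ⌊lam * n⌋₊, a k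

open Finset

theorem sum_Icc_abs_sub_comp_log_two (f : ℕ → ℝ) {n : ℕ} (hn : n ≠ 0) :
    ∑ k ∈ Icc n (2 * n), |f (Nat.log 2 k) - f (Nat.log 2 (k + 1))| =
      |f (Nat.log 2 n) - f (Nat.log 2 n + 1)| := by
  set j := Nat.log 2 n
  have hlow : 2 ^ j ≤ n := Nat.pow_log_le_self 2 hn
  have hup : n < 2 ^ (j + 1) := Nat.lt_pow_succ_log_self (by norm_num) n
  have hpow : 2 ^ (j + 1) = 2 * 2 ^ j := by ring
  have hpow' : 2 ^ (j + 2) = 4 * 2 ^ j := by ring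
  -- the only jump of `Nat.log 2` on `[n, 2n + 1]` is at the power `2 ^ (j + 1)`
  have hjump : 2 ^ (j + 1) - 1 ∈ Icc n (2 * n) := by rw [mem_Icc]; omega
  rw [sum_eq_single_of_mem _ hjump]
  · rw [Nat.log_eq_of_pow_le_of_lt_pow (m := j) (by omega) (by omega),
      Nat.sub_add_cancel Nat.one_le_two_pow, Nat.log_pow (by norm_num)]
  · intro k hk hne
    rw [mem_Icc] at hk
    suffices Nat.log 2 k = Nat.log 2 (k + 1) by rw [this, sub_self, abs_zero]
    rcases lt_or_gt_of_ne hne with hlt | hgt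
    · rw [Nat.log_eq_of_pow_le_of_lt_pow (m := j) (by omega) (by omega),
        Nat.log_eq_of_pow_le_of_lt_pow (m := j) (by omega) (by omega)]
    · rw [Nat.log_eq_of_pow_le_of_lt_pow (m := j + 1) (by omega) (by omega),
        Nat.log_eq_of_pow_le_of_lt_pow (m := j + 1) (by omega) (by omega)]

noncomputable def evenBlockIndicator (k : ℕ) : ℝ := if Even (Nat.log 2 k) then 1 else 0

namespace evenBlockIndicator

theorem nonneg (k : ℕ) : 0 ≤ evenBlockIndicator k := by
  unfold evenBlockIndicator; split <;> norm_num

theorem eq_zero_of_odd {j k : ℕ} (hj : Odd j) (hlow : 2 ^ j ≤ k) (hup : k < 2 ^ (j + 1)) :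
    evenBlockIndicator k = 0 := by
  rw [evenBlockIndicator, Nat.log_eq_of_pow_le_of_lt_pow hlow hup,
    if_neg (Nat.not_even_iff_odd.2 hj)]

theorem add_two_mul {k : ℕ} (hk : k ≠ 0) :
    evenBlockIndicator k + evenBlockIndicator (2 * k) = 1 := by
  rw [evenBlockIndicator, evenBlockIndicator, mul_comm, Nat.log_mul_base (by norm_num) hk]
  by_cases h : Even (Nat.log 2 k) <;> simp [h, Nat.even_add_one]

theorem sum_Icc_abs_sub {n : ℕ} (hn : n ≠ 0) :
    ∑ k ∈ Icc n (2 * n), |evenBlockIndicator k - evenBlockIndicator (k + 1)| = 1 := by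
  unfold evenBlockIndicator
  rw [sum_Icc_abs_sub_comp_log_two (fun b => if Even b then (1 : ℝ) else 0) hn]
  by_cases h : Even (Nat.log 2 n) <;> simp [h, Nat.even_add_one]

theorem le_sum_Ico (n : ℕ) : (n : ℝ) ≤ ∑ k ∈ Ico n (4 * n), evenBlockIndicator k := by
  have hdouble : ∑ k ∈ Ico n (2 * n), evenBlockIndicator (2 * k)
      ≤ ∑ k ∈ Ico (2 * n) (4 * n), evenBlockIndicator k := by
    rw [← sum_image (g := (2 * ·)) (fun _ _ _ _ h => by simpa using h)]
    refine sum_le_sum_of_subset_of_nonneg ?_ (fun k _ _ => nonneg k)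
    intro k hk
    simp only [mem_image, mem_Ico] at hk ⊢
    omega
  calc (n : ℝ)
        = ∑ k ∈ Ico n (2 * n), (evenBlockIndicator k + evenBlockIndicator (2 * k)) := by
        rw [sum_congr rfl fun k hk => add_two_mul (by rw [mem_Ico] at hk; omega)]
        simp [two_mul]
    _ ≤ ∑ k ∈ Ico n (2 * n), evenBlockIndicator k
          + ∑ k ∈ Ico (2 * n) (4 * n), evenBlockIndicator k := by
        rw [sum_add_distrib]; exact add_le_add le_rfl hdouble
    _ = ∑ k ∈ Ico n (4 * n), evenBlockIndicator k := sum_Ico_consecutive _ (by omega) (by omega)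

theorem isMVBVS : IsMVBVS evenBlockIndicator := by
  refine ⟨4, by norm_num, 1, one_pos, fun n hn => ?_⟩
  have hwindow : Ico n (4 * n) ⊆ Icc ⌊(n : ℝ) / 4⌋₊ ⌊4 * (n : ℝ)⌋₊ := by
    have hfloor : ⌊4 * (n : ℝ)⌋₊ = 4 * n := by exact_mod_cast Nat.floor_natCast (4 * n)
    have hfloor' : ⌊(n : ℝ) / 4⌋₊ ≤ n :=
      Nat.floor_le_of_le (by linarith [n.cast_nonneg (α := ℝ)])
    intro k hk
    rw [mem_Ico] at hk
    rw [mem_Icc, hfloor]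
    omega
  have hn' : (0 : ℝ) < n := by exact_mod_cast hn
  rw [sum_Icc_abs_sub (by omega), one_div_mul_eq_div, one_le_div hn']
  calc (n : ℝ) ≤ ∑ k ∈ Ico n (4 * n), evenBlockIndicator k := le_sum_Ico n
    _ ≤ _ := sum_le_sum_of_subset_of_nonneg hwindow fun k _ _ => nonneg k

end evenBlockIndicator

theorem stmt2 :
    ∃ a : ℕ → ℝ,
      (∀ n : ℕ, 1 ≤ n → 0 ≤ a n) ∧
      IsMVBVS a ∧
      ∀ N₀ : ℕ, 1 ≤ N₀ → ∀ C : ℝ, 0 < C → ∃ n : ℕ, 1 ≤ n ∧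
        C * sSup (a '' Set.Ico n (n + N₀)) <
          ∑ k ∈ Finset.Icc n (2 * n), |a k - a (k + 1)| := by
  refine ⟨evenBlockIndicator, fun n _ => evenBlockIndicator.nonneg n,
    evenBlockIndicator.isMVBVS, fun N₀ _ C hC => ?_⟩
  set j := 2 * N₀ + 1
  have hN₀ : N₀ < 2 ^ j :=
    Nat.lt_two_pow_self.trans_le (Nat.pow_le_pow_right two_pos (by omega))
  have hpow : 2 ^ (j + 1) = 2 * 2 ^ j := by ring
  refine ⟨2 ^ j, Nat.one_le_two_pow, ?_⟩
  have hmax : sSup (evenBlockIndicator '' Set.Ico (2 ^ j) (2 ^ j + N₀)) ≤ 0 := by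
    refine Real.sSup_nonpos ?_
    rintro _ ⟨k, hk, rfl⟩
    rw [Set.mem_Ico] at hk
    exact (evenBlockIndicator.eq_zero_of_odd (j := j) ⟨N₀, rfl⟩ hk.1 (by omega)).le
  rw [evenBlockIndicator.sum_Icc_abs_sub (by positivity)]
  linarith [mul_nonpos_of_nonneg_of_nonpos hC.le hmax]
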